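/- arXiv:2104.12382 — 2 statements merged into one kernel-verified Lean document; each statement's English description precedes it below -/
import Mathlib

section
/- Let γ(t) = γ₀(t) and σ(t,u) = γ(t) + u(μ(t)T(t) + H(t)) be the standard parametrization of a flat ribbon, where (T,H,N) is the Darboux frame with invariants κ_g, κ_n, τ_g and μ = -τ_g/κ_n (assuming κ_n never zero). Then the coefficients of the first fundamental form of σ are E = (1 + u(μ' - κ_g))² + (uμκ_g)², F = μ(1 + uμ'), G = 1 + μ², and the second fundamental form coefficients with respect to N are e = κ_n(1 + u(μ' - κ_g - κ_g μ²)), f = 0, g = 0. -/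
open Matrix

theorem my_hasDerivAt_dot {f g : ℝ → Fin 3 → ℝ} {f' g' : Fin 3 → ℝ} {x : ℝ}
    (hf : HasDerivAt f f' x) (hg : HasDerivAt g g' x) :
    HasDerivAt (fun s => f s ⬝ᵥ g s) (f' ⬝ᵥ g x + f x ⬝ᵥ g') x := by
  simp only [dotProduct]
  rw [← Finset.sum_add_distrib]
  exact HasDerivAt.fun_sum fun i _ =>
    ((hasDerivAt_pi.1 hf i).mul (hasDerivAt_pi.1 hg i))

/-- Fundamental forms of the standard parametrization
    σ(t,u) = γ(t) + u(μ(t)T(t) + H(t)) of a flat ribbon. -/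
theorem flat_ribbon_fundamental_forms
    (γ T H N : ℝ → (Fin 3 → ℝ))
    (hγ : ContDiff ℝ (⊤ : ℕ∞) γ) (hTsm : ContDiff ℝ (⊤ : ℕ∞) T)
    (hHsm : ContDiff ℝ (⊤ : ℕ∞) H) (hNsm : ContDiff ℝ (⊤ : ℕ∞) N)
    (hT : T = deriv γ)
    (κg κn τg μ : ℝ → ℝ) (hμsm : ContDiff ℝ (⊤ : ℕ∞) μ)
    (hT' : ∀ t, deriv T t = κg t • H t + κn t • N t)
    (hH' : ∀ t, deriv H t = -(κg t) • T t + τg t • N t)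
    (hN' : ∀ t, deriv N t = -(κn t) • T t - τg t • H t)
    (hunitT : ∀ t, T t ⬝ᵥ T t = 1)
    (hunitH : ∀ t, H t ⬝ᵥ H t = 1)
    (hunitN : ∀ t, N t ⬝ᵥ N t = 1)
    (hTH : ∀ t, T t ⬝ᵥ H t = 0)
    (hTN : ∀ t, T t ⬝ᵥ N t = 0)
    (hHN : ∀ t, H t ⬝ᵥ N t = 0)
    (hκn0 : ∀ t, κn t ≠ 0)
    (hμ : ∀ t, μ t = -(τg t) / κn t)
    (σ : ℝ → ℝ → (Fin 3 → ℝ))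
    (hσ : ∀ t u, σ t u = γ t + u • (μ t • T t + H t)) :
    ∀ t u : ℝ,
      -- E
      (deriv (fun s => σ s u) t) ⬝ᵥ (deriv (fun s => σ s u) t)
        = (1 + u * (deriv μ t - κg t))^2 + (u * μ t * κg t)^2 ∧
      -- F
      (deriv (fun s => σ s u) t) ⬝ᵥ (deriv (fun v => σ t v) u)
        = μ t * (1 + u * deriv μ t) ∧
      -- G
      (deriv (fun v => σ t v) u) ⬝ᵥ (deriv (fun v => σ t v) u) = 1 + μ t ^ 2 ∧
      -- e
      (deriv (fun s => deriv (fun s' => σ s' u) s) t) ⬝ᵥ N t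
        = κn t * (1 + u * (deriv μ t - κg t - κg t * μ t ^ 2)) ∧
      -- f
      (deriv (fun s => deriv (fun v => σ s v) u) t) ⬝ᵥ N t = 0 ∧
      -- g
      (deriv (fun v => deriv (fun v' => σ t v') v) u) ⬝ᵥ N t = 0 := by
  have hμκn : ∀ t, μ t * κn t = -τg t := by
    intro t; rw [hμ, div_mul_cancel₀ _ (hκn0 t)]
  have hγd : Differentiable ℝ γ := hγ.differentiable (by simp)
  have hTd : Differentiable ℝ T := hTsm.differentiable (by simp)
  have hHd : Differentiable ℝ H := hHsm.differentiable (by simp)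
  have hNd : Differentiable ℝ N := hNsm.differentiable (by simp)
  have hμd : Differentiable ℝ μ := hμsm.differentiable (by simp)
  have hTd' : Differentiable ℝ (deriv T) :=
    ((contDiff_infty_iff_deriv.1 (hTsm.of_le (by simp))).2).differentiable (by simp)
  have hHd' : Differentiable ℝ (deriv H) :=
    ((contDiff_infty_iff_deriv.1 (hHsm.of_le (by simp))).2).differentiable (by simp)
  have hμd' : Differentiable ℝ (deriv μ) :=
    ((contDiff_infty_iff_deriv.1 (hμsm.of_le (by simp))).2).differentiable (by simp)
  -- the t-derivative of σ, raw form
  set D : ℝ → ℝ → (Fin 3 → ℝ) :=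
    fun u s => T s + u • (μ s • deriv T s + deriv μ s • T s + deriv H s) with hD
  have hst : ∀ u t, HasDerivAt (fun s => σ s u) (D u t) t := by
    intro u t
    have h1 : HasDerivAt γ (T t) t := by
      rw [hT]; exact (hγd t).hasDerivAt
    have h2 : HasDerivAt (fun s => μ s • T s + H s)
        (μ t • deriv T t + deriv μ t • T t + deriv H t) t :=
      ((hμd t).hasDerivAt.smul (hTd t).hasDerivAt).add (hHd t).hasDerivAt
    have := h1.fun_add (h2.fun_const_smul u)
    simpa only [hσ, hD] using this
  -- raw form equals nice combination
  have hDval : ∀ u t, D u t =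
      (1 + u * (deriv μ t - κg t)) • T t + (u * μ t * κg t) • H t +
      (u * (μ t * κn t + τg t)) • N t := by
    intro u t
    simp only [hD, hT' t, hH' t]
    module
  have hDval' : ∀ u t, D u t =
      (1 + u * (deriv μ t - κg t)) • T t + (u * μ t * κg t) • H t := by
    intro u t
    rw [hDval u t, hμκn t]
    simp
  -- u-derivative of σ
  have hsu : ∀ t u, HasDerivAt (fun v => σ t v) (μ t • T t + H t) u := by
    intro t u
    have : HasDerivAt (fun v : ℝ => γ t + v • (μ t • T t + H t))
        ((1:ℝ) • (μ t • T t + H t)) u :=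
      (((hasDerivAt_id u).smul_const (μ t • T t + H t)).const_add (γ t))
    simpa only [hσ, one_smul] using this
  -- dot product expansion helper
  intro t u
  have hHT : ∀ t, H t ⬝ᵥ T t = 0 := fun t => by rw [dotProduct_comm]; exact hTH t
  have hNT : ∀ t, N t ⬝ᵥ T t = 0 := fun t => by rw [dotProduct_comm]; exact hTN t
  have hNH : ∀ t, N t ⬝ᵥ H t = 0 := fun t => by rw [dotProduct_comm]; exact hHN t
  have hderivt : deriv (fun s => σ s u) t = D u t := (hst u t).deriv
  have hderivu : ∀ t u, deriv (fun v => σ t v) u = μ t • T t + H t :=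
    fun t u => (hsu t u).deriv
  refine ⟨?_, ?_, ?_, ?_, ?_, ?_⟩
  · -- E
    rw [hderivt, hDval' u t]
    simp only [add_dotProduct, dotProduct_add, smul_dotProduct, dotProduct_smul,
      hunitT t, hunitH t, hTH t, hHT t, smul_eq_mul]
    ring
  · -- F
    rw [hderivt, hDval' u t, hderivu t u]
    simp only [add_dotProduct, dotProduct_add, smul_dotProduct, dotProduct_smul,
      hunitT t, hunitH t, hTH t, hHT t, smul_eq_mul]
    ring
  · -- G
    rw [hderivu t u]
    simp only [add_dotProduct, dotProduct_add, smul_dotProduct, dotProduct_smul,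
      hunitT t, hunitH t, hTH t, hHT t, smul_eq_mul]
    ring
  · -- e
    have hDfun : (fun s => deriv (fun s' => σ s' u) s) = D u := by
      funext s; exact (hst u s).deriv
    rw [hDfun]
    -- D u is differentiable
    have hDdiff : DifferentiableAt ℝ (D u) t := by
      show DifferentiableAt ℝ
        (fun s => T s + u • (μ s • deriv T s + deriv μ s • T s + deriv H s)) t
      exact (hTd t).add (((((hμd t).smul (hTd' t)).add ((hμd' t).smul (hTd t))).add
        (hHd' t)).const_smul u)
    -- ⟨D u s, N s⟩ = 0 for all s
    have hDN : ∀ s, D u s ⬝ᵥ N s = 0 := by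
      intro s
      rw [hDval u s, hμκn s]
      simp only [add_dotProduct, smul_dotProduct, hTN s, hHN s, hunitN s, smul_eq_mul]
      ring
    have hdot : HasDerivAt (fun s => D u s ⬝ᵥ N s)
        (deriv (D u) t ⬝ᵥ N t + D u t ⬝ᵥ deriv N t) t :=
      my_hasDerivAt_dot hDdiff.hasDerivAt (hNd t).hasDerivAt
    have hzero : deriv (D u) t ⬝ᵥ N t + D u t ⬝ᵥ deriv N t = 0 := by
      have hconst : (fun s => D u s ⬝ᵥ N s) = fun _ => (0:ℝ) := funext hDN
      have := hdot
      rw [hconst] at this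
      exact this.unique (hasDerivAt_const t 0)
    have : deriv (D u) t ⬝ᵥ N t = -(D u t ⬝ᵥ deriv N t) := by linarith
    rw [this, hDval' u t, hN' t]
    simp only [dotProduct_add, dotProduct_sub, add_dotProduct, smul_dotProduct,
      dotProduct_smul, hunitT t, hunitH t, hTH t, hHT t, hTN t, hHN t, smul_eq_mul]
    linear_combination (u * μ t * κg t) * hμκn t
  · -- f
    have hfun : (fun s => deriv (fun v => σ s v) u) = fun s => μ s • T s + H s := by
      funext s; exact hderivu s u
    rw [hfun]
    have hd : HasDerivAt (fun s => μ s • T s + H s)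
        (μ t • deriv T t + deriv μ t • T t + deriv H t) t :=
      ((hμd t).hasDerivAt.smul (hTd t).hasDerivAt).add (hHd t).hasDerivAt
    rw [hd.deriv, hT' t, hH' t]
    simp only [add_dotProduct, smul_dotProduct, dotProduct_add, dotProduct_smul,
      hTN t, hHN t, hunitN t, neg_smul, neg_dotProduct, smul_eq_mul]
    linear_combination hμκn t
  · -- g
    have hfun : (fun v => deriv (fun v' => σ t v') v) = fun _ => μ t • T t + H t := by
      funext v; exact hderivu t v
    rw [hfun, deriv_const]
    exact zero_dotProduct _
end

section
/- Let τ: [0,L] → ℝ be continuous and ψ(t) = ∫₀^t τ(z) dz. For q ∈ (0,2π), the function θ_q(t) = 2 arccot(cot(q/2) + ψ(t)) solves the initial value problem θ' = τ(cos(θ) - 1), θ(0) = q; and θ ≡ 0 solves it for q = 0. -/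
/-!
With `δ = cot (q / 2) + ψ`, the chain rule and `arccot' x = -1 / (1 + x ^ 2)` give
`θ_q' = -2 τ / (1 + δ ^ 2)`, while `cos (2 arccot δ) - 1 = -2 / (1 + δ ^ 2)`. The initial value
holds because `arccot ∘ cot` is the identity on `(0, π)`.
-/

open Real

/-- Inverse cotangent with values in (0, π). -/
noncomputable def arccot (x : ℝ) : ℝ := π / 2 - Real.arctan x

theorem arccot_cot {θ : ℝ} (h₀ : 0 < θ) (hπ : θ < π) : arccot (cot θ) = θ := by
  have hcot : cot θ = tan (π / 2 - θ) := by
    rw [cot_eq_cos_div_sin, tan_eq_sin_div_cos, sin_pi_div_two_sub, cos_pi_div_two_sub]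
  rw [arccot, hcot, arctan_tan (by linarith) (by linarith)]
  ring

theorem cos_two_mul_arccot (x : ℝ) : cos (2 * arccot x) = (x ^ 2 - 1) / (x ^ 2 + 1) := by
  have hpos : 0 < x ^ 2 + 1 := by positivity
  have hsq : cos (arctan x) ^ 2 = 1 / (x ^ 2 + 1) := by rw [cos_sq_arctan, add_comm]
  rw [arccot, show 2 * (π / 2 - arctan x) = π - 2 * arctan x by ring, cos_pi_sub, cos_two_mul,
    hsq]
  field_simp
  ring

theorem HasDerivAt.arccot {f : ℝ → ℝ} {f' x : ℝ} (hf : HasDerivAt f f' x) :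
    HasDerivAt (fun t => arccot (f t)) (-(1 / (1 + f x ^ 2) * f')) x := by
  simpa only [_root_.arccot] using hf.arctan.const_sub (π / 2)

theorem hasDerivAt_two_mul_arccot_const_add {ψ : ℝ → ℝ} {ψ' t : ℝ} (c : ℝ)
    (hψ : HasDerivAt ψ ψ' t) :
    HasDerivAt (fun s => 2 * arccot (c + ψ s)) (ψ' * (cos (2 * arccot (c + ψ t)) - 1)) t := by
  refine (((hψ.const_add c).arccot).const_mul 2).congr_deriv ?_
  have hpos : 0 < (c + ψ t) ^ 2 + 1 := by positivity
  rw [cos_two_mul_arccot]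
  field_simp
  ring

theorem rectifying_angle_ode_solution_general
    (L : ℝ)
    (τ : ℝ → ℝ) (hτ : Continuous τ)
    (ψ : ℝ → ℝ) (hψ : ∀ t, ψ t = ∫ z in (0:ℝ)..t, τ z) :
    (∀ q ∈ Set.Ioo 0 (2 * π),
      (fun t => 2 * arccot (Real.cot (q / 2) + ψ t)) 0 = q ∧
      ∀ t ∈ Set.Icc 0 L,
        HasDerivAt (fun t => 2 * arccot (Real.cot (q / 2) + ψ t))
          (τ t * (Real.cos (2 * arccot (Real.cot (q / 2) + ψ t)) - 1)) t) ∧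
    ((fun _ : ℝ => (0:ℝ)) 0 = 0 ∧
      ∀ t ∈ Set.Icc 0 L,
        HasDerivAt (fun _ : ℝ => (0:ℝ)) (τ t * (Real.cos (0:ℝ) - 1)) t) := by
  have hψ_deriv (t : ℝ) : HasDerivAt ψ (τ t) t := by
    rw [funext hψ]
    exact (hτ.integral_hasStrictDerivAt 0 t).hasDerivAt
  refine ⟨fun q hq => ⟨?_, fun t _ => hasDerivAt_two_mul_arccot_const_add _ (hψ_deriv t)⟩,
    rfl, fun t _ => ?_⟩
  · simp only [hψ, intervalIntegral.integral_same, add_zero]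
    rw [arccot_cot (by linarith [hq.1]) (by linarith [hq.2])]
    ring
  · simpa using hasDerivAt_const t (0:ℝ)

/-- θ_q(t) = 2 arccot(cot(q/2) + ψ(t)) solves θ' = τ(cos θ - 1), θ(0) = q,
    for q ∈ (0,2π); and θ ≡ 0 solves it for q = 0. -/
theorem rectifying_angle_ode_solution
    (L : ℝ) (hL : 0 < L)
    (τ : ℝ → ℝ) (hτ : Continuous τ)
    (ψ : ℝ → ℝ) (hψ : ∀ t, ψ t = ∫ z in (0:ℝ)..t, τ z) :
    (∀ q ∈ Set.Ioo 0 (2 * π),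
      (fun t => 2 * arccot (Real.cot (q / 2) + ψ t)) 0 = q ∧
      ∀ t ∈ Set.Icc 0 L,
        HasDerivAt (fun t => 2 * arccot (Real.cot (q / 2) + ψ t))
          (τ t * (Real.cos (2 * arccot (Real.cot (q / 2) + ψ t)) - 1)) t) ∧
    ((fun _ : ℝ => (0:ℝ)) 0 = 0 ∧
      ∀ t ∈ Set.Icc 0 L,
        HasDerivAt (fun _ : ℝ => (0:ℝ)) (τ t * (Real.cos (0:ℝ) - 1)) t) :=
  rectifying_angle_ode_solution_general L τ hτ ψ hψ
end
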